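/- Let u ∈ U, τ ∈ (0,1), v ∈ B(0,ρ_max), and let u^ε be the perturbed control equal to v on (τ−ε, τ] and to u elsewhere, with x₁ and x₁^ε the corresponding solutions on [0,1] of ẋ = f(x,·) starting at x₀. Then lim_{ε→0⁺} (1/ε) ∫_{τ−ε}^{τ} { c(x₁^ε(t), u^ε(t)) − c(x₁(t), u(t)) } dt = c(x₁(τ), v) − c(x₁(τ), u(τ)). -/

import Mathlib

/-!
Since the two controls differ only on an interval of length `ε`, Grönwall's inequality applied
to the difference of the two trajectories gives `‖x₁^ε(t) - x₁(t)‖ = O(ε)` uniformly on `[0, 1]`.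
Hence, for `t ∈ (τ - ε, τ]`, `x₁^ε(t) → x₁(τ)`, and since `u` is left continuous at `τ` the
integrand `c(x₁^ε(t), v) - c(x₁(t), u(t))` tends to `c(x₁(τ), v) - c(x₁(τ), u(τ))` as `ε → 0⁺`,
uniformly in `t ∈ (τ - ε, τ]`. The average over `(τ - ε, τ]` of such an integrand has the same
limit.
-/

open Set MeasureTheory Filter Topology

noncomputable section

open scoped Classical

abbrev EucSp (n : ℕ) := EuclideanSpace ℝ (Fin n)

/-- A function is piecewise continuous on `s` if it is continuous within `s` outside of a
finite set of points. -/
def PiecewiseContinuousOn {E : Type*} [TopologicalSpace E] (u : ℝ → E) (s : Set ℝ) : Prop :=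
  ∃ D : Finset ℝ, ∀ t ∈ s, t ∉ D → ContinuousWithinAt u s t

/-- Admissible controls: piecewise continuous functions on `[0, T]` with values in the
closed ball of radius `ρmax`. -/
def AdmissibleCtrl {m : ℕ} (T ρmax : ℝ) (u : ℝ → EucSp m) : Prop :=
  PiecewiseContinuousOn u (Set.Icc 0 T) ∧ ∀ t ∈ Set.Icc (0 : ℝ) T, ‖u t‖ ≤ ρmax

/-- `x` is a (Carathéodory) solution of `ẋ = f(x, u(t))` on `[a, b]`, in integral form. -/
def IsSolOn {nx m : ℕ} (f : EucSp nx → EucSp m → EucSp nx) (u : ℝ → EucSp m)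
    (a b : ℝ) (x : ℝ → EucSp nx) : Prop :=
  ContinuousOn x (Set.Icc a b) ∧
    ∀ t ∈ Set.Icc a b, x t = x a + ∫ s in a..t, f (x s) (u s)

/-- The modes `x i : [i-1, i] → ℝ^{n_x}` of the hybrid system with time-driven switching:
`x 1 0 = x₀`, each mode solves `ẋ = f(x, u)` on `[i-1, i]`, and modes are linked by the jump
map `g` with observation `y i`. -/
def HybridModes {nx ny m : ℕ} (T : ℕ) (f : EucSp nx → EucSp m → EucSp nx)
    (g : EucSp nx → EucSp ny → EucSp nx) (u : ℝ → EucSp m) (y : ℕ → EucSp ny)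
    (x₀ : EucSp nx) (x : ℕ → ℝ → EucSp nx) : Prop :=
  x 1 0 = x₀ ∧
    (∀ i : ℕ, 1 ≤ i → i ≤ T → IsSolOn f u ((i : ℝ) - 1) (i : ℝ) (x i)) ∧
    (∀ i : ℕ, 1 ≤ i → i + 1 ≤ T → x (i + 1) (i : ℝ) = g (x i (i : ℝ)) (y i))

/-- The hybrid trajectory `X` built from the modes: `X t = x i t` on `[i-1, i)` and
`X T = g (x T T) (y T)`. -/
def IsHybridTraj {nx ny : ℕ} (T : ℕ) (g : EucSp nx → EucSp ny → EucSp nx)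
    (y : ℕ → EucSp ny) (x : ℕ → ℝ → EucSp nx) (X : ℝ → EucSp nx) : Prop :=
  (∀ i : ℕ, 1 ≤ i → i ≤ T → ∀ t ∈ Set.Ico ((i : ℝ) - 1) (i : ℝ), X t = x i t) ∧
    X (T : ℝ) = g (x T (T : ℝ)) (y T)

/-- The perturbed control: equal to `v` on `(τ - ε, τ]` and to `u` elsewhere. -/
def perturb {m : ℕ} (u : ℝ → EucSp m) (τ : ℝ) (v : EucSp m) (ε : ℝ) : ℝ → EucSp m :=
  fun t => if τ - ε < t ∧ t ≤ τ then v else u t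

theorem add_mul_gronwallBound_zero (δ K x : ℝ) :
    δ + K * gronwallBound 0 K δ x = δ * Real.exp (K * x) := by
  rcases eq_or_ne K 0 with rfl | hK
  · simp [gronwallBound_K0]
  · rw [gronwallBound_of_K_ne_0 hK]
    field_simp
    ring

theorem le_mul_exp_of_le_add_mul_integral {g : ℝ → ℝ} {a b δ K : ℝ} (hK : 0 ≤ K)
    (hg : ContinuousOn g (Icc a b))
    (h : ∀ t ∈ Icc a b, g t ≤ δ + K * ∫ s in a..t, g s) :
    ∀ t ∈ Icc a b, g t ≤ δ * Real.exp (K * (t - a)) := by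
  intro t ht
  have hab : a ≤ b := ht.1.trans ht.2
  set G : ℝ → ℝ := fun t => ∫ s in a..t, g s
  have hG : ContinuousOn G (Icc a b) := by
    simpa only [G, uIcc_of_le hab] using intervalIntegral.continuousOn_primitive_interval'
      (hg.intervalIntegrable_of_Icc (μ := volume) hab) left_mem_uIcc
  have hG' : ∀ s ∈ Ico a b, HasDerivWithinAt G (g s) (Ici s) s := fun s hs =>
    have hmem : Icc a b ∈ 𝓝[>] s := Icc_mem_nhdsGT_of_mem hs
    intervalIntegral.integral_hasDerivWithinAt_right
      ((hg.mono (Icc_subset_Icc_right hs.2.le)).intervalIntegrable_of_Icc hs.1)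
      ⟨_, hmem, hg.aestronglyMeasurable measurableSet_Icc⟩
      ((hg s (Ico_subset_Icc_self hs)).mono_of_mem_nhdsWithin hmem)
  -- the primitive `G` satisfies `G' = g ≤ δ + K * G`, so the differential Grönwall bound applies
  have hGt : G t ≤ gronwallBound 0 K δ (t - a) :=
    le_gronwallBound_of_liminf_deriv_right_le hG
      (fun s hs _ hr => (hG' s hs).liminf_right_slope_le hr) (by simp [G])
      (fun s hs => by linarith [h s (Ico_subset_Icc_self hs)]) t ht
  calc g t ≤ δ + K * G t := h t ht
    _ ≤ δ + K * gronwallBound 0 K δ (t - a) := by gcongr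
    _ = δ * Real.exp (K * (t - a)) := add_mul_gronwallBound_zero δ K (t - a)

theorem Continuous.integrableOn_comp_prodMk {α X Y E : Type*} [TopologicalSpace α]
    [MeasurableSpace α] [OpensMeasurableSpace α] [SecondCountableTopology α]
    [TopologicalSpace X] [TopologicalSpace.PseudoMetrizableSpace X] [TopologicalSpace Y]
    [NormedAddCommGroup E] {μ : Measure α} [IsFiniteMeasureOnCompacts μ]
    {F : X × Y → E} (hF : Continuous F) {s : Set α} (hs : IsCompact s) (hsm : MeasurableSet s)
    {z : α → X} (hz : ContinuousOn z s) {w : α → Y} (hw : AEStronglyMeasurable w (μ.restrict s))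
    {k : Set Y} (hk : IsCompact k) (hwk : ∀ t ∈ s, w t ∈ k) :
    IntegrableOn (fun t => F (z t, w t)) s μ := by
  obtain ⟨C, hC⟩ := ((hs.image_of_continuousOn hz).prod hk).exists_bound_of_continuousOn
    hF.continuousOn
  refine .of_bound hs.measure_lt_top
    (hF.comp_aestronglyMeasurable ((hz.aestronglyMeasurable hsm).prodMk hw)) C ?_
  filter_upwards [self_mem_ae_restrict hsm] with t ht
  exact hC _ ⟨mem_image_of_mem z ht, hwk t ht⟩

theorem PiecewiseContinuousOn.aestronglyMeasurable {E : Type*} [TopologicalSpace E]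
    [TopologicalSpace.PseudoMetrizableSpace E] {u : ℝ → E} {s : Set ℝ}
    (hu : PiecewiseContinuousOn u s) (hs : MeasurableSet s) {μ : Measure ℝ}
    [NullSingletonClass μ] : AEStronglyMeasurable u (μ.restrict s) := by
  obtain ⟨D, hD⟩ := hu
  have hcont : ContinuousOn u (s \ D) := fun t ht => (hD t ht.1 ht.2).mono sdiff_subset
  rw [← Measure.restrict_congr_set (sdiff_ae_eq_self.2 (measure_mono_null inter_subset_right
    (D.countable_toSet.measure_zero μ)))]
  exact hcont.aestronglyMeasurable (hs.diff D.finite_toSet.measurableSet)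

theorem MeasureTheory.IntegrableOn.intervalIntegrable_of_mem_Icc {E : Type*}
    [NormedAddCommGroup E] {F : ℝ → E} {μ : Measure ℝ} {a b s t : ℝ}
    (hF : IntegrableOn F (Icc a b) μ) (hs : s ∈ Icc a b) (ht : t ∈ Icc a b) :
    IntervalIntegrable F μ s t :=
  (hF.mono_set (uIcc_subset_Icc hs ht)).intervalIntegrable

section Perturb

variable {m : ℕ} {u : ℝ → EucSp m} {τ ε : ℝ} {v : EucSp m}

theorem perturb_eq_piecewise : perturb u τ v ε = (Ioc (τ - ε) τ).piecewise (fun _ => v) u := by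
  ext t : 1
  simp only [perturb, Set.piecewise, mem_Ioc]

theorem MeasureTheory.AEStronglyMeasurable.perturb {μ : Measure ℝ}
    (hu : AEStronglyMeasurable u μ) :
    AEStronglyMeasurable (perturb u τ v ε) μ := by
  rw [perturb_eq_piecewise]
  exact aestronglyMeasurable_const.piecewise measurableSet_Ioc hu.restrict

theorem norm_perturb_le {ρ t : ℝ} (hv : ‖v‖ ≤ ρ) (hu : ‖u t‖ ≤ ρ) : ‖perturb u τ v ε t‖ ≤ ρ := by
  unfold perturb; split_ifs <;> assumption

theorem integral_norm_perturb_sub_le {ρ a b : ℝ} (hab : a ≤ b) (hε : 0 ≤ ε) (hv : ‖v‖ ≤ ρ)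
    (hu : ∀ t ∈ Ioc (τ - ε) τ, ‖u t‖ ≤ ρ) :
    ∫ s in a..b, ‖perturb u τ v ε s - u s‖ ≤ 2 * ρ * ε := by
  have hind : (fun s => ‖perturb u τ v ε s - u s‖) =
      (Ioc (τ - ε) τ).indicator fun s => ‖v - u s‖ := by
    ext s
    by_cases hs : s ∈ Ioc (τ - ε) τ <;> simp [perturb_eq_piecewise, hs]
  have hvol : volume (Ioc a b ∩ Ioc (τ - ε) τ) ≤ ENNReal.ofReal ε := by
    calc volume (Ioc a b ∩ Ioc (τ - ε) τ) ≤ volume (Ioc (τ - ε) τ) :=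
          measure_mono inter_subset_right
      _ = ENNReal.ofReal ε := by rw [Real.volume_Ioc, sub_sub_cancel]
  have hfin : volume (Ioc a b ∩ Ioc (τ - ε) τ) < ⊤ := hvol.trans_lt ENNReal.ofReal_lt_top
  rw [intervalIntegral.integral_of_le hab, hind, setIntegral_indicator measurableSet_Ioc]
  have hρ : 0 ≤ ρ := (norm_nonneg v).trans hv
  calc ∫ s in Ioc a b ∩ Ioc (τ - ε) τ, ‖v - u s‖
        ≤ ‖∫ s in Ioc a b ∩ Ioc (τ - ε) τ, ‖v - u s‖‖ := Real.le_norm_self _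
    _ ≤ (ρ + ρ) * volume.real (Ioc a b ∩ Ioc (τ - ε) τ) :=
        norm_setIntegral_le_of_norm_le_const hfin fun s hs =>
          (norm_norm _).trans_le ((norm_sub_le _ _).trans (add_le_add hv (hu s hs.2)))
    _ ≤ (ρ + ρ) * ε := by
        gcongr
        exact ENNReal.toReal_le_of_le_ofReal hε hvol
    _ = 2 * ρ * ε := by ring

end Perturb

section Stability

variable {nx m : ℕ} {f : EucSp nx → EucSp m → EucSp nx} {u w : ℝ → EucSp m}
  {x y : ℝ → EucSp nx} {a b ρ : ℝ}

theorem IsSolOn.integrableOn_comp {E : Type*} [NormedAddCommGroup E]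
    {F : EucSp nx × EucSp m → E} (hF : Continuous F) (hx : IsSolOn f u a b x)
    (hu : AEStronglyMeasurable u (volume.restrict (Icc a b))) (hub : ∀ t ∈ Icc a b, ‖u t‖ ≤ ρ) :
    IntegrableOn (fun s => F (x s, u s)) (Icc a b) :=
  hF.integrableOn_comp_prodMk isCompact_Icc measurableSet_Icc hx.1 hu (isCompact_closedBall 0 ρ)
    fun t ht => mem_closedBall_zero_iff.2 (hub t ht)

theorem IsSolOn.sub_eq_integral (hf : Continuous fun p : EucSp nx × EucSp m => f p.1 p.2)
    (hu : AEStronglyMeasurable u (volume.restrict (Icc a b))) (hub : ∀ t ∈ Icc a b, ‖u t‖ ≤ ρ)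
    (hw : AEStronglyMeasurable w (volume.restrict (Icc a b))) (hwb : ∀ t ∈ Icc a b, ‖w t‖ ≤ ρ)
    (hx : IsSolOn f u a b x) (hy : IsSolOn f w a b y) (h₀ : y a = x a) :
    ∀ t ∈ Icc a b, y t - x t = ∫ s in a..t, (f (y s) (w s) - f (x s) (u s)) := by
  intro t ht
  have ha : a ∈ Icc a b := left_mem_Icc.2 (ht.1.trans ht.2)
  rw [hy.2 t ht, hx.2 t ht, h₀, intervalIntegral.integral_sub
    ((hy.integrableOn_comp hf hw hwb).intervalIntegrable_of_mem_Icc ha ht)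
    ((hx.integrableOn_comp hf hu hub).intervalIntegrable_of_mem_Icc ha ht)]
  abel

variable {K δ : ℝ}

theorem IsSolOn.norm_sub_le_add_mul_integral (hK : 0 ≤ K)
    (hf : Continuous fun p : EucSp nx × EucSp m => f p.1 p.2)
    (hLip : ∀ (x' x'' : EucSp nx) (u' u'' : EucSp m), ‖u'‖ ≤ ρ → ‖u''‖ ≤ ρ →
      ‖f x' u' - f x'' u''‖ ≤ K * (‖x' - x''‖ + ‖u' - u''‖))
    (hu : AEStronglyMeasurable u (volume.restrict (Icc a b))) (hub : ∀ t ∈ Icc a b, ‖u t‖ ≤ ρ)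
    (hw : AEStronglyMeasurable w (volume.restrict (Icc a b))) (hwb : ∀ t ∈ Icc a b, ‖w t‖ ≤ ρ)
    (hx : IsSolOn f u a b x) (hy : IsSolOn f w a b y) (h₀ : y a = x a)
    (hδ : ∫ s in a..b, ‖w s - u s‖ ≤ δ) :
    ∀ t ∈ Icc a b, ‖y t - x t‖ ≤ K * δ + K * ∫ s in a..t, ‖y s - x s‖ := by
  intro t ht
  have ha : a ∈ Icc a b := left_mem_Icc.2 (ht.1.trans ht.2)
  have hwu : IntegrableOn (fun s => ‖w s - u s‖) (Icc a b) :=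
    .of_bound measure_Icc_lt_top (hw.sub hu).norm (ρ + ρ) <|
      (ae_restrict_iff' measurableSet_Icc).2 <| .of_forall fun s hs => by
        rw [norm_norm]; exact (norm_sub_le _ _).trans (add_le_add (hwb s hs) (hub s hs))
  have hgI : IntervalIntegrable (fun s => ‖y s - x s‖) volume a t :=
    ((hy.1.sub hx.1).norm.mono (Icc_subset_Icc_right ht.2)).intervalIntegrable_of_Icc ht.1
  have hwuI : IntervalIntegrable (fun s => ‖w s - u s‖) volume a t :=
    hwu.intervalIntegrable_of_mem_Icc ha ht
  have hctrl : ∫ s in a..t, ‖w s - u s‖ ≤ δ :=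
    (intervalIntegral.integral_mono_interval le_rfl ht.1 ht.2 (.of_forall fun _ => norm_nonneg _)
      (hwu.intervalIntegrable_of_mem_Icc ha (right_mem_Icc.2 (ht.1.trans ht.2)))).trans hδ
  calc ‖y t - x t‖ = ‖∫ s in a..t, (f (y s) (w s) - f (x s) (u s))‖ := by
        rw [hx.sub_eq_integral hf hu hub hw hwb hy h₀ t ht]
    _ ≤ ∫ s in a..t, (K * ‖y s - x s‖ + K * ‖w s - u s‖) := by
        refine intervalIntegral.norm_integral_le_of_norm_le ht.1 (.of_forall fun s hs => ?_)
          ((hgI.const_mul K).add (hwuI.const_mul K))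
        have hs' : s ∈ Icc a b := ⟨hs.1.le, hs.2.trans ht.2⟩
        rw [← mul_add]
        exact hLip _ _ _ _ (hwb s hs') (hub s hs')
    _ = K * (∫ s in a..t, ‖y s - x s‖) + K * ∫ s in a..t, ‖w s - u s‖ := by
        rw [intervalIntegral.integral_add (hgI.const_mul K) (hwuI.const_mul K),
          intervalIntegral.integral_const_mul, intervalIntegral.integral_const_mul]
    _ ≤ K * δ + K * ∫ s in a..t, ‖y s - x s‖ := by
        linarith [mul_le_mul_of_nonneg_left hctrl hK]

theorem IsSolOn.norm_sub_le_mul_exp (hK : 0 ≤ K)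
    (hf : Continuous fun p : EucSp nx × EucSp m => f p.1 p.2)
    (hLip : ∀ (x' x'' : EucSp nx) (u' u'' : EucSp m), ‖u'‖ ≤ ρ → ‖u''‖ ≤ ρ →
      ‖f x' u' - f x'' u''‖ ≤ K * (‖x' - x''‖ + ‖u' - u''‖))
    (hu : AEStronglyMeasurable u (volume.restrict (Icc a b))) (hub : ∀ t ∈ Icc a b, ‖u t‖ ≤ ρ)
    (hw : AEStronglyMeasurable w (volume.restrict (Icc a b))) (hwb : ∀ t ∈ Icc a b, ‖w t‖ ≤ ρ)
    (hx : IsSolOn f u a b x) (hy : IsSolOn f w a b y) (h₀ : y a = x a)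
    (hδ : ∫ s in a..b, ‖w s - u s‖ ≤ δ) :
    ∀ t ∈ Icc a b, ‖y t - x t‖ ≤ K * δ * Real.exp (K * (b - a)) := by
  intro t ht
  have hδ₀ : 0 ≤ δ :=
    (intervalIntegral.integral_nonneg (ht.1.trans ht.2) fun _ _ => norm_nonneg _).trans hδ
  calc ‖y t - x t‖ ≤ K * δ * Real.exp (K * (t - a)) :=
        le_mul_exp_of_le_add_mul_integral hK (hy.1.sub hx.1).norm
          (hx.norm_sub_le_add_mul_integral hK hf hLip hu hub hw hwb hy h₀ hδ) t ht
    _ ≤ K * δ * Real.exp (K * (b - a)) := by gcongr; exact ht.2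

end Stability

/-- Convergence along `shrinkingIoc τ` is convergence as `ε → 0⁺`, uniformly in `t ∈ (τ - ε, τ]`. -/
def shrinkingIoc (τ : ℝ) : Filter (ℝ × ℝ) := 𝓝[>] 0 ×ˢ 𝓝[≤] τ ⊓ 𝓟 {p | τ - p.1 < p.2}

section ShrinkingIoc

variable {τ : ℝ}

theorem tendsto_fst_shrinkingIoc : Tendsto Prod.fst (shrinkingIoc τ) (𝓝[>] 0) :=
  tendsto_fst.mono_left inf_le_left

theorem tendsto_snd_shrinkingIoc : Tendsto Prod.snd (shrinkingIoc τ) (𝓝[≤] τ) :=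
  tendsto_snd.mono_left inf_le_left

theorem norm_inv_smul_integral_sub_le {E : Type*} [NormedAddCommGroup E] [NormedSpace ℝ E]
    [CompleteSpace E] {φ : ℝ → E} {L : E} {a b C : ℝ} (hab : a < b)
    (hφ : IntervalIntegrable φ volume a b) (hC : ∀ t ∈ Ioc a b, ‖φ t - L‖ ≤ C) :
    ‖(b - a)⁻¹ • (∫ t in a..b, φ t) - L‖ ≤ C := by
  have hba : 0 < b - a := sub_pos.2 hab
  have hsub : (b - a)⁻¹ • (∫ t in a..b, φ t) - L = (b - a)⁻¹ • ∫ t in a..b, (φ t - L) := by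
    rw [intervalIntegral.integral_sub hφ intervalIntegrable_const, intervalIntegral.integral_const,
      smul_sub, inv_smul_smul₀ hba.ne']
  rw [hsub, norm_smul, Real.norm_eq_abs, abs_inv, abs_of_pos hba]
  calc (b - a)⁻¹ * ‖∫ t in a..b, (φ t - L)‖ ≤ (b - a)⁻¹ * (C * |b - a|) := by
        gcongr
        exact intervalIntegral.norm_integral_le_of_norm_le_const fun t ht =>
          hC t (by rwa [uIoc_of_le hab.le] at ht)
    _ = C := by rw [abs_of_pos hba]; field_simp

theorem tendsto_inv_smul_integral_of_tendsto_shrinkingIoc {E : Type*} [NormedAddCommGroup E]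
    [NormedSpace ℝ E] [CompleteSpace E] {φ : ℝ → ℝ → E} {L : E}
    (hint : ∀ᶠ ε in 𝓝[>] 0, IntervalIntegrable (φ ε) volume (τ - ε) τ)
    (hφ : Tendsto (Function.uncurry φ) (shrinkingIoc τ) (𝓝 L)) :
    Tendsto (fun ε => ε⁻¹ • ∫ t in (τ - ε)..τ, φ ε t) (𝓝[>] 0) (𝓝 L) := by
  refine Metric.tendsto_nhds.2 fun δ hδ => ?_
  obtain ⟨A, hA, B, hB, hAB⟩ :=
    mem_prod_iff.1 (mem_inf_principal.1 (hφ (Metric.closedBall_mem_nhds L (half_pos hδ))))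
  obtain ⟨l, hl, hlB⟩ := mem_nhdsLE_iff_exists_Ioc_subset.1 hB
  filter_upwards [hA, hint, Ioo_mem_nhdsGT (sub_pos.2 hl)] with ε hεA hεint hε
  have hbound := norm_inv_smul_integral_sub_le (sub_lt_self τ hε.1) hεint fun t ht =>
    have hB' : t ∈ B := hlB ⟨by linarith [ht.1, hε.2], ht.2⟩
    mem_closedBall_iff_norm.1 (hAB (mk_mem_prod hεA hB') ht.1)
  rw [sub_sub_cancel] at hbound
  rw [dist_eq_norm]
  linarith

theorem tendsto_shrinkingIoc_of_norm_sub_le {E : Type*} [SeminormedAddCommGroup E]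
    {X : ℝ → E} {Y : ℝ → ℝ → E} {C : ℝ} {s : Set ℝ} (hs : s ∈ 𝓝[≤] τ)
    (hX : Tendsto X (𝓝[≤] τ) (𝓝 (X τ))) (hY : ∀ᶠ ε in 𝓝[>] 0, ∀ t ∈ s, ‖Y ε t - X t‖ ≤ C * ε) :
    Tendsto (fun p : ℝ × ℝ => Y p.1 p.2) (shrinkingIoc τ) (𝓝 (X τ)) := by
  have hgap : Tendsto (fun p : ℝ × ℝ => Y p.1 p.2 - X p.2) (shrinkingIoc τ) (𝓝 0) := by
    refine squeeze_zero_norm' ?_ ((tendsto_nhdsWithin_of_tendsto_nhds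
      ((continuous_const_mul C).tendsto' 0 0 (mul_zero C))).comp tendsto_fst_shrinkingIoc)
    filter_upwards [tendsto_fst_shrinkingIoc.eventually hY,
      tendsto_snd_shrinkingIoc.eventually hs] with p hp ht
    exact hp p.2 ht
  simpa using (hX.comp tendsto_snd_shrinkingIoc).add hgap

end ShrinkingIoc

section Needle

variable {m : ℕ} {u : ℝ → EucSp m} {v : EucSp m} {τ : ℝ}

theorem IsSolOn.norm_sub_le_of_perturb {nx : ℕ} {f : EucSp nx → EucSp m → EucSp nx}
    {x y : ℝ → EucSp nx} {a b ρ ε K : ℝ} (hK : 0 ≤ K)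
    (hf : Continuous fun p : EucSp nx × EucSp m => f p.1 p.2)
    (hLip : ∀ (x' x'' : EucSp nx) (u' u'' : EucSp m), ‖u'‖ ≤ ρ → ‖u''‖ ≤ ρ →
      ‖f x' u' - f x'' u''‖ ≤ K * (‖x' - x''‖ + ‖u' - u''‖))
    (hu : AEStronglyMeasurable u (volume.restrict (Icc a b))) (hub : ∀ t ∈ Icc a b, ‖u t‖ ≤ ρ)
    (hv : ‖v‖ ≤ ρ) (hε : 0 ≤ ε) (hτ : Ioc (τ - ε) τ ⊆ Icc a b)
    (hx : IsSolOn f u a b x) (hy : IsSolOn f (perturb u τ v ε) a b y) (h₀ : y a = x a) :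
    ∀ t ∈ Icc a b, ‖y t - x t‖ ≤ 2 * K * ρ * Real.exp (K * (b - a)) * ε := by
  intro t ht
  have hδ := integral_norm_perturb_sub_le (ht.1.trans ht.2) hε hv fun s hs => hub s (hτ hs)
  have := hx.norm_sub_le_mul_exp hK hf hLip hu hub hu.perturb
    (fun s hs => norm_perturb_le hv (hub s hs)) hy h₀ hδ t ht
  linarith

theorem eventually_perturb_eq_shrinkingIoc :
    ∀ᶠ p : ℝ × ℝ in shrinkingIoc τ, perturb u τ v p.1 p.2 = v := by
  filter_upwards [tendsto_snd_shrinkingIoc.eventually self_mem_nhdsWithin,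
    inf_le_right (a := 𝓝[>] 0 ×ˢ 𝓝[≤] τ) (mem_principal_self _)] with p hle hlt
  exact if_pos ⟨hlt, hle⟩

theorem tendsto_cost_perturb_shrinkingIoc {X E : Type*} [TopologicalSpace X]
    [TopologicalSpace E] [Sub E] [ContinuousSub E] {c : X → EucSp m → E}
    (hc : Continuous fun p : X × EucSp m => c p.1 p.2)
    {x : ℝ → X} {xe : ℝ → ℝ → X} (hx : Tendsto x (𝓝[≤] τ) (𝓝 (x τ)))
    (hu : ContinuousWithinAt u (Iic τ) τ)
    (hxe : Tendsto (fun p : ℝ × ℝ => xe p.1 p.2) (shrinkingIoc τ) (𝓝 (x τ))) :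
    Tendsto (Function.uncurry fun ε t => c (xe ε t) (perturb u τ v ε t) - c (x t) (u t))
      (shrinkingIoc τ) (𝓝 (c (x τ) v - c (x τ) (u τ))) := by
  have hpert := (hc.tendsto _).comp (hxe.prodMk_nhds (tendsto_const_nhds (x := v)))
  have hnom := (hc.tendsto _).comp ((hx.prodMk_nhds hu).comp tendsto_snd_shrinkingIoc)
  refine (hpert.sub hnom).congr' ?_
  filter_upwards [eventually_perturb_eq_shrinkingIoc (u := u) (v := v)] with p hp
  simp only [Function.comp_apply, Function.uncurry, hp]

end Needle

theorem averaged_cost_difference_limit_general {nx m : ℕ} (T : ℕ) (hT : 1 ≤ T)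
    (ρmax K₁ : ℝ) (hK₁ : 1 ≤ K₁)
    (f : EucSp nx → EucSp m → EucSp nx)
    (hf : ContDiff ℝ 1 fun p : EucSp nx × EucSp m => f p.1 p.2)
    (hLip : ∀ (x' x'' : EucSp nx) (u' u'' : EucSp m), ‖u'‖ ≤ ρmax → ‖u''‖ ≤ ρmax →
      ‖f x' u' - f x'' u''‖ ≤ K₁ * (‖x' - x''‖ + ‖u' - u''‖))
    (c : EucSp nx → EucSp m → ℝ)
    (hcc : Continuous fun p : EucSp nx × EucSp m => c p.1 p.2)
    (u : ℝ → EucSp m) (hu : AdmissibleCtrl (T : ℝ) ρmax u)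
    (τ : ℝ) (hτ : τ ∈ Set.Ioo (0 : ℝ) 1) (v : EucSp m) (hv : ‖v‖ ≤ ρmax)
    (huτ : ContinuousWithinAt u (Set.Iic τ) τ)
    (x₀ : EucSp nx) (x : ℝ → EucSp nx) (xe : ℝ → ℝ → EucSp nx)
    (hxnom : x 0 = x₀ ∧ IsSolOn f u 0 1 x)
    (hxe : ∀ ε ∈ Set.Icc (0 : ℝ) τ,
      xe ε 0 = x₀ ∧ IsSolOn f (perturb u τ v ε) 0 1 (xe ε)) :
    Tendsto
      (fun ε : ℝ => ε⁻¹ *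
        ∫ t in (τ - ε)..τ, (c (xe ε t) (perturb u τ v ε t) - c (x t) (u t)))
      (𝓝[>] 0) (𝓝 (c (x τ) v - c (x τ) (u τ))) := by
  obtain ⟨hτ₀, hτ₁⟩ := hτ
  have hI : Icc (0 : ℝ) 1 ⊆ Icc 0 T := Icc_subset_Icc_right (by exact_mod_cast hT)
  have hu₀₁ : AEStronglyMeasurable u (volume.restrict (Icc 0 1)) :=
    (hu.1.aestronglyMeasurable measurableSet_Icc).mono_set hI
  have hub : ∀ t ∈ Icc (0 : ℝ) 1, ‖u t‖ ≤ ρmax := fun t ht => hu.2 t (hI ht)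
  have hsmall : ∀ᶠ ε in 𝓝[>] 0, ε ∈ Icc 0 τ ∧ Ioc (τ - ε) τ ⊆ Icc 0 1 := by
    filter_upwards [Ioo_mem_nhdsGT hτ₀] with ε hε
    exact ⟨⟨hε.1.le, hε.2.le⟩, fun t ht => ⟨by linarith [ht.1, hε.2], ht.2.trans hτ₁.le⟩⟩
  have hIcc : Icc (0 : ℝ) 1 ∈ 𝓝[≤] τ :=
    mem_of_superset (Icc_mem_nhdsLE hτ₀) (Icc_subset_Icc_right hτ₁.le)
  have hx_left : Tendsto x (𝓝[≤] τ) (𝓝 (x τ)) :=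
    (hxnom.2.1 τ ⟨hτ₀.le, hτ₁.le⟩).mono_of_mem_nhdsWithin hIcc
  have hxe_lim : Tendsto (fun p : ℝ × ℝ => xe p.1 p.2) (shrinkingIoc τ) (𝓝 (x τ)) := by
    refine tendsto_shrinkingIoc_of_norm_sub_le
      (C := 2 * K₁ * ρmax * Real.exp (K₁ * (1 - 0))) hIcc hx_left ?_
    filter_upwards [hsmall] with ε ⟨hε, hετ⟩
    exact hxnom.2.norm_sub_le_of_perturb (by linarith) hf.continuous hLip hu₀₁ hub hv hε.1 hετ
      (hxe ε hε).2 ((hxe ε hε).1.trans hxnom.1.symm)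
  refine tendsto_inv_smul_integral_of_tendsto_shrinkingIoc ?_ ?_
  · filter_upwards [hsmall] with ε ⟨hε, hετ⟩
    have hcost := ((hxe ε hε).2.integrableOn_comp hcc hu₀₁.perturb
      fun t ht => norm_perturb_le hv (hub t ht)).sub (hxnom.2.integrableOn_comp hcc hu₀₁ hub)
    exact hcost.intervalIntegrable_of_mem_Icc ⟨by linarith [hε.2], by linarith [hε.1]⟩
      ⟨hτ₀.le, hτ₁.le⟩
  · exact tendsto_cost_perturb_shrinkingIoc hcc hx_left huτ hxe_lim

/-- Lemma 17: the averaged difference of the instantaneous cost over the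
perturbation interval converges, as `ε → 0⁺`, to `c(x₁(τ), v) − c(x₁(τ), u(τ))`. -/
theorem averaged_cost_difference_limit {nx m : ℕ} (T : ℕ) (hT : 1 ≤ T)
    (ρmax K₁ : ℝ) (hK₁ : 1 ≤ K₁)
    (f : EucSp nx → EucSp m → EucSp nx)
    (hf : ContDiff ℝ 1 fun p : EucSp nx × EucSp m => f p.1 p.2)
    (hLip : ∀ (x' x'' : EucSp nx) (u' u'' : EucSp m), ‖u'‖ ≤ ρmax → ‖u''‖ ≤ ρmax →
      ‖f x' u' - f x'' u''‖ ≤ K₁ * (‖x' - x''‖ + ‖u' - u''‖))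
    (c : EucSp nx → EucSp m → ℝ)
    (hcc : Continuous fun p : EucSp nx × EucSp m => c p.1 p.2)
    (hcx : ∀ uu : EucSp m, ContDiff ℝ 1 fun z => c z uu)
    (u : ℝ → EucSp m) (hu : AdmissibleCtrl (T : ℝ) ρmax u)
    (τ : ℝ) (hτ : τ ∈ Set.Ioo (0 : ℝ) 1) (v : EucSp m) (hv : ‖v‖ ≤ ρmax)
    (huτ : ContinuousWithinAt u (Set.Iic τ) τ)
    (x₀ : EucSp nx) (x : ℝ → EucSp nx) (xe : ℝ → ℝ → EucSp nx)
    (hxnom : x 0 = x₀ ∧ IsSolOn f u 0 1 x)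
    (hxe : ∀ ε ∈ Set.Icc (0 : ℝ) τ,
      xe ε 0 = x₀ ∧ IsSolOn f (perturb u τ v ε) 0 1 (xe ε)) :
    Tendsto
      (fun ε : ℝ => ε⁻¹ *
        ∫ t in (τ - ε)..τ, (c (xe ε t) (perturb u τ v ε t) - c (x t) (u t)))
      (𝓝[>] 0) (𝓝 (c (x τ) v - c (x τ) (u τ))) :=
  averaged_cost_difference_limit_general T hT ρmax K₁ hK₁ f hf hLip c hcc u hu τ hτ v hv huτ x₀ x xe
    hxnom hxe
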